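/- Trapping in K₁⁻: let α > 2, ω > 0, and let x(t) be a solution of the N-body problem with center of mass zero, energy E < E*(ω), nonzero angular momentum, and initial data satisfying |A| ≥ ω I(x(0)), K_ω(x(0)) < 0, and (d/dt) I(x(t))|_{t=0} ≤ 0. Then for all t > 0 in the maximal interval one has |A| ≥ ω I(x(t)) and K_ω(x(t)) < 0 (the solution remains in K₁⁻), and the solution has a singularity in finite time. -/

import Mathlib

/- STATEMENT 15: trapping in K₁⁻: a solution starting in K₁⁻ with İ(0) ≤ 0 remains in
K₁⁻ and has a singularity in finite time (α > 2, ω > 0). -/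

namespace NBodyPaper

open Real Filter

noncomputable section

abbrev E3 := EuclideanSpace ℝ (Fin 3)

variable {N : ℕ}

/-- The α-homogeneous potential `U(x) = -∑_{i<j} m_i m_j / |x_i - x_j|^α`. -/
def pot (α : ℝ) (m : Fin N → ℝ) (q : Fin N → E3) : ℝ :=
  -∑ i : Fin N, ∑ j ∈ Finset.univ.filter (fun j => i < j), m i * m j / ‖q i - q j‖ ^ α

def kinetic (m : Fin N → ℝ) (v : Fin N → E3) : ℝ := (1 / 2) * ∑ i, m i * ‖v i‖ ^ 2

/-- Total energy `E(x, ẋ)`. -/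
def energy (α : ℝ) (m : Fin N → ℝ) (q v : Fin N → E3) : ℝ := kinetic m v + pot α m q

/-- Moment of inertia `I(x) = ∑ m_i |x_i|²`. -/
def inertia (m : Fin N → ℝ) (q : Fin N → E3) : ℝ := ∑ i, m i * ‖q i‖ ^ 2

/-- `ẍ_i = -∇_i U / m_i = -α ∑_{j≠i} m_j (x_i - x_j)/|x_i - x_j|^{α+2}`. -/
def accel (α : ℝ) (m : Fin N → ℝ) (q : Fin N → E3) (i : Fin N) : E3 :=
  (-α) • ∑ j ∈ Finset.univ.erase i, (m j / ‖q i - q j‖ ^ (α + 2)) • (q i - q j)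

/-- Collision-free configuration. -/
def OffDiag (q : Fin N → E3) : Prop := ∀ i j, i ≠ j → q i ≠ q j

/-- The time interval `[0, σ)` for `σ ∈ (0, ∞]`. -/
def Dom (σ : EReal) : Set ℝ := {t : ℝ | 0 ≤ t ∧ (t : EReal) < σ}

/-- `x` (with velocity `v`) solves the N-body equations on the set `s`. -/
def IsSolnOn (α : ℝ) (m : Fin N → ℝ) (x v : ℝ → Fin N → E3) (s : Set ℝ) : Prop :=
  ∀ t ∈ s, OffDiag (x t) ∧
    ∀ i, HasDerivAt (fun τ => x τ i) (v t i) t ∧ HasDerivAt (fun τ => v τ i) (accel α m (x t) i) t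

/-- `x` is a solution on its maximal interval of existence `[0, σ)`:
it solves the equations there and no solution extends it to a longer interval. -/
def IsMaxSoln (α : ℝ) (m : Fin N → ℝ) (σ : EReal) (x v : ℝ → Fin N → E3) : Prop :=
  0 < σ ∧ IsSolnOn α m x v (Dom σ) ∧
    ∀ (σ' : EReal) (x' v' : ℝ → Fin N → E3), IsSolnOn α m x' v' (Dom σ') →
      (∀ t ∈ Dom σ, x' t = x t ∧ v' t = v t) → σ' ≤ σ

/-- Center of mass at the origin. -/
def comZero (m : Fin N → ℝ) (q : Fin N → E3) : Prop := ∑ i, m i • q i = 0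

/-- The threshold function `K_ω(x) = ω² I(x) + α U(x)`. -/
def Kfun (α : ℝ) (m : Fin N → ℝ) (ω : ℝ) (q : Fin N → E3) : ℝ :=
  ω ^ 2 * inertia m q + α * pot α m q

/-- `E_ω(x) = (ω²/2) I(x) + U(x)`. -/
def Eomega (α : ℝ) (m : Fin N → ℝ) (ω : ℝ) (q : Fin N → E3) : ℝ :=
  ω ^ 2 / 2 * inertia m q + pot α m q

/-- The excited energy `E*(ω) = inf { E_ω(x) : K_ω(x) = 0 }`, the infimum taken over
collision-free configurations with center of mass zero. -/
def Estar (α : ℝ) (m : Fin N → ℝ) (ω : ℝ) : ℝ :=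
  sInf {e : ℝ | ∃ q : Fin N → E3, OffDiag q ∧ comZero m q ∧ Kfun α m ω q = 0 ∧ e = Eomega α m ω q}

/-- The cross product on `ℝ³`. -/
def cross3 (a b : E3) : E3 :=
  (WithLp.equiv 2 (Fin 3 → ℝ)).symm
    (crossProduct ((WithLp.equiv 2 (Fin 3 → ℝ)) a) ((WithLp.equiv 2 (Fin 3 → ℝ)) b))

/-- The angular momentum `A(x, ẋ) = ∑ m_i x_i × ẋ_i`. -/
def angMom (m : Fin N → ℝ) (q v : Fin N → E3) : E3 := ∑ i, m i • cross3 (q i) (v i)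

open RealInnerProductSpace in
/-- The derivative of the moment of inertia: `İ(x, ẋ) = 2 ∑ m_i ⟨x_i, ẋ_i⟩`. -/
def Idot (m : Fin N → ℝ) (q v : Fin N → E3) : ℝ := 2 * ∑ i, m i * ⟪q i, v i⟫

/-! ### Auxiliary lemmas -/

open RealInnerProductSpace

section Aux

lemma cross3_add_left (a b c : E3) : cross3 (a + b) c = cross3 a c + cross3 b c := by
  simp [cross3, map_add]
lemma cross3_smul_left (r : ℝ) (a c : E3) : cross3 (r • a) c = r • cross3 a c := by
  simp [cross3, map_smul]
lemma cross3_add_right (a b c : E3) : cross3 a (b + c) = cross3 a b + cross3 a c := by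
  simp [cross3, map_add]
lemma cross3_smul_right (r : ℝ) (a c : E3) : cross3 a (r • c) = r • cross3 a c := by
  simp [cross3, map_smul]
lemma cross3_antisymm (a b : E3) : cross3 b a = - cross3 a b := by
  rw [cross3, cross3, ← cross_anticomm]; rfl

def crossLM : E3 →ₗ[ℝ] E3 →ₗ[ℝ] E3 :=
  LinearMap.mk₂ ℝ cross3 cross3_add_left cross3_smul_left cross3_add_right cross3_smul_right

def crossCLM : E3 →L[ℝ] E3 →L[ℝ] E3 :=
  LinearMap.toContinuousLinearMap
    { toFun := fun a => LinearMap.toContinuousLinearMap (crossLM a),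
      map_add' := by intros a b; ext c; simp [crossLM, cross3_add_left],
      map_smul' := by intros r a; ext c; simp [crossLM, cross3_smul_left] }

lemma crossCLM_apply (a b : E3) : crossCLM a b = cross3 a b := by
  simp [crossCLM, crossLM]

lemma cross3_sum_right {ι : Type*} (a : E3) (s : Finset ι) (f : ι → E3) :
    cross3 a (∑ j ∈ s, f j) = ∑ j ∈ s, cross3 a (f j) :=
  map_sum (crossLM a) f s

lemma cross3_sub_right (a b c : E3) : cross3 a (b - c) = cross3 a b - cross3 a c :=
  map_sub (crossLM a) b c

lemma cross3_self (a : E3) : cross3 a a = 0 := by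
  simp [cross3, cross_self]

lemma hasDerivAt_cross3 {f g : ℝ → E3} {f' g' : E3} {t : ℝ}
    (hf : HasDerivAt f f' t) (hg : HasDerivAt g g' t) :
    HasDerivAt (fun τ => cross3 (f τ) (g τ)) (cross3 f' (g t) + cross3 (f t) g') t := by
  have h1 : HasDerivAt (fun τ => crossCLM (f τ)) (crossCLM f') t :=
    (crossCLM.hasFDerivAt.comp_hasDerivAt t hf)
  have := h1.clm_apply hg
  simpa [crossCLM_apply] using this

lemma norm_cross3_le (a b : E3) : ‖cross3 a b‖ ≤ ‖a‖ * ‖b‖ := by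
  have key : ∀ x : E3, ‖x‖ = Real.sqrt (x 0 ^ 2 + x 1 ^ 2 + x 2 ^ 2) := by
    intro x
    rw [EuclideanSpace.norm_eq]
    congr 1
    rw [Fin.sum_univ_three]
    simp [sq_abs]
  have hc : ∀ i : Fin 3, (cross3 a b) i =
      (crossProduct ((WithLp.equiv 2 (Fin 3 → ℝ)) a) ((WithLp.equiv 2 (Fin 3 → ℝ)) b)) i :=
    fun i => rfl
  rw [key, key, key, ← Real.sqrt_mul (by positivity)]
  apply Real.sqrt_le_sqrt
  rw [hc 0, hc 1, hc 2]
  simp only [cross_apply]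
  have e0 : ((WithLp.equiv 2 (Fin 3 → ℝ)) a) = fun i => a i := rfl
  have e1 : ((WithLp.equiv 2 (Fin 3 → ℝ)) b) = fun i => b i := rfl
  rw [e0, e1]
  simp only [Matrix.cons_val_zero, Matrix.cons_val_one, Matrix.head_cons, Matrix.cons_val_two,
    Matrix.tail_cons]
  nlinarith [sq_nonneg (a 0 * b 0 + a 1 * b 1 + a 2 * b 2), sq_nonneg (a 0 * b 1 - a 1 * b 0),
    sq_nonneg (a 0 * b 2 - a 2 * b 0), sq_nonneg (a 1 * b 2 - a 2 * b 1)]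

lemma sum_erase_eq_sum_pairs {N : ℕ} {M : Type*} [AddCommMonoid M] (f : Fin N → Fin N → M) :
    ∑ i, ∑ j ∈ Finset.univ.erase i, f i j
      = ∑ i, ∑ j ∈ Finset.univ.filter (fun j => i < j), (f i j + f j i) := by
  have h1 : ∀ i : Fin N, Finset.univ.erase i
      = Finset.univ.filter (fun j => i < j) ∪ Finset.univ.filter (fun j => j < i) := by
    intro i; ext j
    simp only [Finset.mem_erase, Finset.mem_filter, Finset.mem_union, Finset.mem_univ,
      true_and, and_true, ne_eq]
    constructor
    · intro h; exact Ne.lt_or_gt (fun hh => h hh.symm)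
    · rintro (h | h) <;> intro hh <;> subst hh <;> exact lt_irrefl _ h
  have hdisj : ∀ i : Fin N, Disjoint (Finset.univ.filter (fun j => i < j))
      (Finset.univ.filter (fun j => j < i)) := by
    intro i
    refine Finset.disjoint_left.2 ?_
    intro j hj hj'
    simp only [Finset.mem_filter] at hj hj'
    exact absurd (hj.2.trans hj'.2) (lt_irrefl _)
  calc ∑ i, ∑ j ∈ Finset.univ.erase i, f i j
      = ∑ i, (∑ j ∈ Finset.univ.filter (fun j => i < j), f i j
          + ∑ j ∈ Finset.univ.filter (fun j => j < i), f i j) := by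
        refine Finset.sum_congr rfl fun i _ => ?_
        rw [h1 i, Finset.sum_union (hdisj i)]
    _ = ∑ i, ∑ j ∈ Finset.univ.filter (fun j => i < j), f i j
          + ∑ i, ∑ j ∈ Finset.univ.filter (fun j => j < i), f i j := by
        rw [Finset.sum_add_distrib]
    _ = ∑ i, ∑ j ∈ Finset.univ.filter (fun j => i < j), f i j
          + ∑ i, ∑ j ∈ Finset.univ.filter (fun j => i < j), f j i := by
        congr 1
        rw [Finset.sum_comm' (s := Finset.univ) (t := fun i => Finset.univ.filter (fun j => j < i))
          (t' := Finset.univ) (s' := fun j => Finset.univ.filter (fun i => j < i))]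
        intro i j; simp
    _ = ∑ i, ∑ j ∈ Finset.univ.filter (fun j => i < j), (f i j + f j i) := by
        rw [← Finset.sum_add_distrib]
        refine Finset.sum_congr rfl fun i _ => ?_
        rw [← Finset.sum_add_distrib]

lemma hasDerivAt_normsq {f : ℝ → E3} {f' : E3} {t : ℝ} (hf : HasDerivAt f f' t) :
    HasDerivAt (fun τ => ‖f τ‖ ^ 2) (2 * ⟪f t, f'⟫) t := by
  have h := hf.inner (𝕜 := ℝ) hf
  have he : (fun τ => ‖f τ‖ ^ 2) = fun τ => ⟪f τ, f τ⟫ := by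
    funext τ; rw [real_inner_self_eq_norm_sq]
  rw [he]
  refine h.congr_deriv ?_
  rw [real_inner_comm]; ring

lemma hasDerivAt_inertia (m : Fin N → ℝ) {x v : ℝ → Fin N → E3} {t : ℝ}
    (hx : ∀ i, HasDerivAt (fun τ => x τ i) (v t i) t) :
    HasDerivAt (fun τ => inertia m (x τ)) (Idot m (x t) (v t)) t := by
  have h : HasDerivAt (fun τ => ∑ i, m i * ‖x τ i‖ ^ 2)
      (∑ i, m i * (2 * ⟪x t i, v t i⟫)) t :=
    HasDerivAt.fun_sum fun i _ => (hasDerivAt_normsq (hx i)).const_mul (m i)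
  have he : Idot m (x t) (v t) = ∑ i, m i * (2 * ⟪x t i, v t i⟫) := by
    rw [Idot, Finset.mul_sum]; congr 1; funext i; ring
  simp only [inertia]
  rw [he]; exact h

lemma hasDerivAt_norm_rpow {α : ℝ} {f : ℝ → E3} {f' : E3} {t : ℝ}
    (hf : HasDerivAt f f' t) (hne : f t ≠ 0) :
    HasDerivAt (fun τ => ‖f τ‖ ^ α) (α * ⟪f t, f'⟫ * ‖f t‖ ^ (α - 2)) t := by
  have hpos : (0:ℝ) < ⟪f t, f t⟫ := by
    rw [real_inner_self_eq_norm_sq]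
    exact pow_pos (norm_pos_iff.2 hne) 2
  have h2 := (hf.inner (𝕜 := ℝ) hf)
  have h2' : HasDerivAt (fun τ => ⟪f τ, f τ⟫) (2 * ⟪f t, f'⟫) t := by
    refine h2.congr_deriv ?_; rw [real_inner_comm]; ring
  have h3 := h2'.rpow_const (p := α / 2) (Or.inl (ne_of_gt hpos))
  have he : (fun τ => (⟪f τ, f τ⟫ : ℝ) ^ (α / 2)) = fun τ => ‖f τ‖ ^ α := by
    funext τ
    rw [real_inner_self_eq_norm_sq, ← Real.rpow_natCast (‖f τ‖) 2,
      ← Real.rpow_mul (norm_nonneg _)]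
    norm_num
    rw [show (2:ℝ) * (α/2) = α by ring]
  rw [he] at h3
  refine h3.congr_deriv ?_
  have hn : (0:ℝ) < ‖f t‖ := norm_pos_iff.2 hne
  rw [real_inner_self_eq_norm_sq, ← Real.rpow_natCast (‖f t‖) 2,
    ← Real.rpow_mul (norm_nonneg _)]
  rw [show ((2:ℕ):ℝ) * (α/2 - 1) = α - 2 by push_cast; ring]
  ring

/-- `V̇`: the value of the derivative of the potential along a path. -/
def Vdot (α : ℝ) (m : Fin N → ℝ) (q w : Fin N → E3) : ℝ :=
  α * ∑ i : Fin N, ∑ j ∈ Finset.univ.filter (fun j => i < j),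
    m i * m j * ⟪q i - q j, w i - w j⟫ / ‖q i - q j‖ ^ (α + 2)

lemma hasDerivAt_pairterm {α : ℝ} (c : ℝ) {f : ℝ → E3} {f' : E3} {t : ℝ}
    (hf : HasDerivAt f f' t) (hne : f t ≠ 0) :
    HasDerivAt (fun τ => c / ‖f τ‖ ^ α)
      (-(α * (c * ⟪f t, f'⟫ / ‖f t‖ ^ (α + 2)))) t := by
  have hr : (0:ℝ) < ‖f t‖ := norm_pos_iff.2 hne
  have hg := hasDerivAt_norm_rpow (α := α) hf hne
  have hgne : ‖f t‖ ^ α ≠ 0 := (Real.rpow_pos_of_pos hr α).ne'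
  have h := (hasDerivAt_const t c).fun_div hg hgne
  refine h.congr_deriv ?_
  have e1 : (‖f t‖ ^ α) ^ 2 = ‖f t‖ ^ (α - 2) * ‖f t‖ ^ (α + 2) := by
    rw [sq, ← Real.rpow_add hr, ← Real.rpow_add hr]; ring_nf
  rw [e1]
  have h2 := (Real.rpow_pos_of_pos hr (α - 2)).ne'
  have h3 := (Real.rpow_pos_of_pos hr (α + 2)).ne'
  field_simp
  ring

lemma hasDerivAt_pot (α : ℝ) (m : Fin N → ℝ) {x v : ℝ → Fin N → E3} {t : ℝ}
    (hod : OffDiag (x t)) (hx : ∀ i, HasDerivAt (fun τ => x τ i) (v t i) t) :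
    HasDerivAt (fun τ => pot α m (x τ)) (Vdot α m (x t) (v t)) t := by
  have h : HasDerivAt (fun τ => ∑ i : Fin N, ∑ j ∈ Finset.univ.filter (fun j => i < j),
      m i * m j / ‖x τ i - x τ j‖ ^ α)
      (∑ i : Fin N, ∑ j ∈ Finset.univ.filter (fun j => i < j),
        -(α * (m i * m j * ⟪x t i - x t j, v t i - v t j⟫ / ‖x t i - x t j‖ ^ (α + 2)))) t := by
    refine HasDerivAt.fun_sum fun i _ => HasDerivAt.fun_sum fun j hj => ?_
    have hij : i ≠ j := by
      simp only [Finset.mem_filter] at hj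
      exact ne_of_lt hj.2
    exact hasDerivAt_pairterm (m i * m j) ((hx i).sub (hx j)) (sub_ne_zero.2 (hod i j hij))
  have h2 := h.fun_neg
  have he : (fun τ => -∑ i : Fin N, ∑ j ∈ Finset.univ.filter (fun j => i < j),
      m i * m j / ‖x τ i - x τ j‖ ^ α) = fun τ => pot α m (x τ) := by
    funext τ; rw [pot]
  rw [he] at h2
  refine h2.congr_deriv ?_
  rw [Vdot, Finset.mul_sum, ← Finset.sum_neg_distrib]
  refine Finset.sum_congr rfl fun i _ => ?_
  rw [Finset.mul_sum, ← Finset.sum_neg_distrib]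
  refine Finset.sum_congr rfl fun j _ => ?_
  ring

lemma hasDerivAt_kinetic (m : Fin N → ℝ) {x v : ℝ → Fin N → E3} {t : ℝ} {α : ℝ}
    (hv : ∀ i, HasDerivAt (fun τ => v τ i) (accel α m (x t) i) t) :
    HasDerivAt (fun τ => kinetic m (v τ))
      (∑ i, m i * ⟪v t i, accel α m (x t) i⟫) t := by
  have h : HasDerivAt (fun τ => ∑ i, m i * ‖v τ i‖ ^ 2)
      (∑ i, m i * (2 * ⟪v t i, accel α m (x t) i⟫)) t :=
    HasDerivAt.fun_sum fun i _ => (hasDerivAt_normsq (hv i)).const_mul (m i)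
  have h2 := h.const_mul (1/2 : ℝ)
  simp only [kinetic]
  refine h2.congr_deriv ?_
  rw [Finset.mul_sum]
  refine Finset.sum_congr rfl fun i _ => ?_
  ring

lemma hasDerivAt_Idot (m : Fin N → ℝ) {x v : ℝ → Fin N → E3} {t : ℝ} {α : ℝ}
    (hx : ∀ i, HasDerivAt (fun τ => x τ i) (v t i) t)
    (hv : ∀ i, HasDerivAt (fun τ => v τ i) (accel α m (x t) i) t) :
    HasDerivAt (fun τ => Idot m (x τ) (v τ))
      (2 * ∑ i, m i * (⟪v t i, v t i⟫ + ⟪x t i, accel α m (x t) i⟫)) t := by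
  have h : HasDerivAt (fun τ => ∑ i, m i * ⟪x τ i, v τ i⟫)
      (∑ i, m i * (⟪v t i, v t i⟫ + ⟪x t i, accel α m (x t) i⟫)) t := by
    refine HasDerivAt.fun_sum fun i _ => ?_
    have := ((hx i).inner (𝕜 := ℝ) (hv i)).const_mul (m i)
    refine this.congr_deriv ?_
    ring
  have h2 := h.const_mul (2 : ℝ)
  simp only [Idot]
  exact h2

end Aux


section Identities

open RealInnerProductSpace

lemma inner_accel (α : ℝ) (m : Fin N → ℝ) (q : Fin N → E3) (i : Fin N) (w : E3) :
    ⟪w, accel α m q i⟫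
      = ∑ j ∈ Finset.univ.erase i,
          (-α) * (m j / ‖q i - q j‖ ^ (α + 2) * ⟪w, q i - q j⟫) := by
  rw [accel, real_inner_smul_right, inner_sum, Finset.mul_sum]
  refine Finset.sum_congr rfl fun j _ => ?_
  rw [real_inner_smul_right]

lemma norm_sub_symm (a b : E3) : ‖a - b‖ = ‖b - a‖ := norm_sub_rev a b

lemma sum_inner_q_accel (α : ℝ) (m : Fin N → ℝ) {q : Fin N → E3} (hod : OffDiag q) :
    ∑ i, m i * ⟪q i, accel α m q i⟫ = α * pot α m q := by
  have step1 : ∑ i, m i * ⟪q i, accel α m q i⟫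
      = ∑ i, ∑ j ∈ Finset.univ.erase i,
          (-α) * (m i * m j / ‖q i - q j‖ ^ (α + 2) * ⟪q i, q i - q j⟫) := by
    refine Finset.sum_congr rfl fun i _ => ?_
    rw [inner_accel, Finset.mul_sum]
    refine Finset.sum_congr rfl fun j _ => ?_
    ring
  rw [step1, sum_erase_eq_sum_pairs]
  rw [pot, mul_neg, Finset.mul_sum, ← Finset.sum_neg_distrib]
  refine Finset.sum_congr rfl fun i _ => ?_
  rw [Finset.mul_sum, ← Finset.sum_neg_distrib]
  refine Finset.sum_congr rfl fun j hj => ?_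
  have hij : i ≠ j := by
    simp only [Finset.mem_filter] at hj
    exact ne_of_lt hj.2
  have hne : q i - q j ≠ 0 := sub_ne_zero.2 (hod i j hij)
  have hr : (0:ℝ) < ‖q i - q j‖ := norm_pos_iff.2 hne
  rw [norm_sub_symm (q j) (q i)]
  have hinner : ⟪q i, q i - q j⟫ - ⟪q j, q i - q j⟫ = ‖q i - q j‖ ^ (2:ℕ) := by
    rw [← inner_sub_left, real_inner_self_eq_norm_sq]
  have hjq : ⟪q j, q j - q i⟫ = -⟪q j, q i - q j⟫ := by
    rw [show q j - q i = -(q i - q j) by abel, inner_neg_right]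
  rw [hjq]
  have hpow : ‖q i - q j‖ ^ (2:ℕ) / ‖q i - q j‖ ^ (α + 2) = (‖q i - q j‖ ^ α)⁻¹ := by
    rw [← Real.rpow_natCast (‖q i - q j‖) 2, ← Real.rpow_sub hr, ← Real.rpow_neg_one,
      ← Real.rpow_mul (le_of_lt hr)]
    norm_num
  have expand : (-α) * (m i * m j / ‖q i - q j‖ ^ (α + 2) * ⟪q i, q i - q j⟫)
      + (-α) * (m j * m i / ‖q i - q j‖ ^ (α + 2) * -⟪q j, q i - q j⟫)
      = (-α) * (m i * m j) * ((⟪q i, q i - q j⟫ - ⟪q j, q i - q j⟫) / ‖q i - q j‖ ^ (α + 2)) := by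
    ring
  rw [expand, hinner, hpow]
  field_simp

lemma sum_inner_v_accel (α : ℝ) (m : Fin N → ℝ) {q w : Fin N → E3} (hod : OffDiag q) :
    ∑ i, m i * ⟪w i, accel α m q i⟫ = -(Vdot α m q w) := by
  have step1 : ∑ i, m i * ⟪w i, accel α m q i⟫
      = ∑ i, ∑ j ∈ Finset.univ.erase i,
          (-α) * (m i * m j / ‖q i - q j‖ ^ (α + 2) * ⟪w i, q i - q j⟫) := by
    refine Finset.sum_congr rfl fun i _ => ?_
    rw [inner_accel, Finset.mul_sum]
    refine Finset.sum_congr rfl fun j _ => ?_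
    ring
  rw [step1, sum_erase_eq_sum_pairs]
  rw [Vdot, Finset.mul_sum, ← Finset.sum_neg_distrib]
  refine Finset.sum_congr rfl fun i _ => ?_
  rw [Finset.mul_sum, ← Finset.sum_neg_distrib]
  refine Finset.sum_congr rfl fun j hj => ?_
  rw [norm_sub_symm (q j) (q i)]
  have hjq : ⟪w j, q j - q i⟫ = -⟪w j, q i - q j⟫ := by
    rw [show q j - q i = -(q i - q j) by abel, inner_neg_right]
  rw [hjq]
  have hinner : ⟪q i - q j, w i - w j⟫ = ⟪w i, q i - q j⟫ - ⟪w j, q i - q j⟫ := by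
    rw [real_inner_comm, inner_sub_left]
  rw [hinner]
  ring

lemma sum_smul_cross_accel (α : ℝ) (m : Fin N → ℝ) (q : Fin N → E3) :
    ∑ i, m i • cross3 (q i) (accel α m q i) = 0 := by
  have step1 : ∑ i, m i • cross3 (q i) (accel α m q i)
      = ∑ i, ∑ j ∈ Finset.univ.erase i,
          ((-α) * (m i * (m j / ‖q i - q j‖ ^ (α + 2)))) • cross3 (q i) (q i - q j) := by
    refine Finset.sum_congr rfl fun i _ => ?_
    rw [accel, cross3_smul_right, cross3_sum_right, Finset.smul_sum, Finset.smul_sum]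
    refine Finset.sum_congr rfl fun j _ => ?_
    rw [cross3_smul_right, smul_smul, smul_smul]
    congr 1
    ring
  rw [step1, sum_erase_eq_sum_pairs]
  refine Finset.sum_eq_zero fun i _ => Finset.sum_eq_zero fun j hj => ?_
  rw [norm_sub_symm (q j) (q i)]
  have e1 : cross3 (q i) (q i - q j) = - cross3 (q i) (q j) := by
    rw [cross3_sub_right, cross3_self, zero_sub]
  have e2 : cross3 (q j) (q j - q i) = cross3 (q i) (q j) := by
    rw [cross3_sub_right, cross3_self, zero_sub, cross3_antisymm, neg_neg]
  rw [e1, e2, smul_neg]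
  rw [show m j * (m i / ‖q i - q j‖ ^ (α + 2)) = m i * (m j / ‖q i - q j‖ ^ (α + 2)) by ring]
  abel

end Identities


section Statics

open RealInnerProductSpace

lemma inertia_nonneg (m : Fin N → ℝ) (hm : ∀ i, 0 < m i) (q : Fin N → E3) :
    0 ≤ inertia m q :=
  Finset.sum_nonneg fun i _ => mul_nonneg (hm i).le (by positivity)

lemma pot_nonpos (α : ℝ) (m : Fin N → ℝ) (hm : ∀ i, 0 < m i) (q : Fin N → E3) :
    pot α m q ≤ 0 := by
  rw [pot, neg_nonpos]
  refine Finset.sum_nonneg fun i _ => Finset.sum_nonneg fun j _ => ?_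
  have hr : (0:ℝ) ≤ ‖q i - q j‖ ^ α := Real.rpow_nonneg (norm_nonneg _) α
  exact div_nonneg (mul_nonneg (hm i).le (hm j).le) hr

lemma pot_neg_of_K_neg {α ω : ℝ} (hα : 2 < α) (m : Fin N → ℝ) (hm : ∀ i, 0 < m i)
    {q : Fin N → E3} (hK : Kfun α m ω q < 0) : pot α m q < 0 := by
  have hI := inertia_nonneg m hm q
  rw [Kfun] at hK
  nlinarith [sq_nonneg ω]

lemma exists_pair_of_pot_neg {α : ℝ} {m : Fin N → ℝ} {q : Fin N → E3}
    (hU : pot α m q < 0) : ∃ i j : Fin N, i ≠ j := by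
  by_contra h
  push_neg at h
  have : pot α m q = 0 := by
    rw [pot, neg_eq_zero]
    refine Finset.sum_eq_zero fun i _ => Finset.sum_eq_zero fun j hj => ?_
    simp only [Finset.mem_filter] at hj
    exact absurd (h i j) (ne_of_lt hj.2)
  rw [this] at hU; exact lt_irrefl _ hU

lemma inertia_pos_of_offDiag {m : Fin N → ℝ} (hm : ∀ i, 0 < m i) {q : Fin N → E3}
    (hod : OffDiag q) {i j : Fin N} (hij : i ≠ j) : 0 < inertia m q := by
  rcases lt_or_eq_of_le (inertia_nonneg m hm q) with h | h
  · exact h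
  · exfalso
    have hz : ∀ k : Fin N, q k = 0 := by
      intro k
      have := (Finset.sum_eq_zero_iff_of_nonneg
        (fun i _ => mul_nonneg (hm i).le (by positivity))).1 h.symm k (Finset.mem_univ k)
      have h2 : ‖q k‖ ^ 2 = 0 := by
        rcases mul_eq_zero.1 this with h' | h'
        · exact absurd h' (hm k).ne'
        · exact h'
      have := pow_eq_zero_iff (n := 2) (by norm_num) |>.1 h2
      exact norm_eq_zero.1 this
    exact hod i j hij (by rw [hz i, hz j])

lemma pot_smul (α : ℝ) (m : Fin N → ℝ) (q : Fin N → E3) {l : ℝ} (hl : 0 < l) :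
    pot α m (fun i => l • q i) = l ^ (-α) * pot α m q := by
  rw [pot, pot, mul_neg, Finset.mul_sum, neg_inj]
  refine Finset.sum_congr rfl fun i _ => ?_
  rw [Finset.mul_sum]
  refine Finset.sum_congr rfl fun j _ => ?_
  have : ‖l • q i - l • q j‖ = l * ‖q i - q j‖ := by
    rw [← smul_sub, norm_smul, Real.norm_eq_abs, abs_of_pos hl]
  rw [this, Real.mul_rpow hl.le (norm_nonneg _), Real.rpow_neg hl.le]
  rw [div_eq_mul_inv, div_eq_mul_inv, mul_inv]
  ring

lemma inertia_smul (m : Fin N → ℝ) (q : Fin N → E3) {l : ℝ} (hl : 0 < l) :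
    inertia m (fun i => l • q i) = l ^ 2 * inertia m q := by
  rw [inertia, inertia, Finset.mul_sum]
  refine Finset.sum_congr rfl fun i _ => ?_
  rw [norm_smul, Real.norm_eq_abs, abs_of_pos hl, mul_pow]
  ring

lemma Estar_lowerBound (α ω : ℝ) (hα : 2 < α) (m : Fin N → ℝ) (hm : ∀ i, 0 < m i) :
    ∀ e ∈ {e : ℝ | ∃ q : Fin N → E3, OffDiag q ∧ comZero m q ∧ Kfun α m ω q = 0 ∧
      e = Eomega α m ω q}, (0:ℝ) ≤ e := by
  rintro e ⟨q, -, -, hK, rfl⟩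
  rw [Kfun] at hK
  rw [Eomega]
  have hI := inertia_nonneg m hm q
  have hα0 : (0:ℝ) < α := by linarith
  have hU : pot α m q = -(ω^2 * inertia m q) / α := by
    field_simp
    linarith
  have h2 : ω^2/2 * inertia m q + -(ω^2 * inertia m q)/α
      = ω^2 * inertia m q * (α - 2) / (2*α) := by
    field_simp
    ring
  rw [hU, h2]
  exact div_nonneg (mul_nonneg (mul_nonneg (sq_nonneg ω) hI) (by linarith)) (by linarith)

lemma Estar_le_bound {α ω : ℝ} (hα : 2 < α) (hω : 0 < ω) {m : Fin N → ℝ} (hm : ∀ i, 0 < m i)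
    {q : Fin N → E3} (hod : OffDiag q) (hc : comZero m q) (hK : Kfun α m ω q < 0) :
    Estar α m ω ≤ (α / 2 - 1) * (-pot α m q) := by
  have hα0 : (0:ℝ) < α := by linarith
  have hU : pot α m q < 0 := pot_neg_of_K_neg hα m hm hK
  obtain ⟨i0, j0, hij0⟩ := exists_pair_of_pot_neg hU
  have hI : 0 < inertia m q := inertia_pos_of_offDiag hm hod hij0
  set U := pot α m q with hUdef
  set I := inertia m q with hIdef
  set g : ℝ → ℝ := fun l => ω^2 * (l^2 * I) + α * (l ^ (-α) * U) with hg
  have hM0 : (0:ℝ) ≤ (1 + α * (-U)) / (ω^2 * I) :=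
    div_nonneg (by nlinarith) (by positivity)
  set M : ℝ := max 1 (Real.sqrt ((1 + α * (-U)) / (ω^2 * I))) with hM
  have h1M : (1:ℝ) ≤ M := le_max_left _ _
  have hgM : 0 < g M := by
    have hMa : M ^ (-α) ≤ 1 :=
      Real.rpow_le_one_of_one_le_of_nonpos h1M (by linarith)
    have h2 : α * (M ^ (-α) * U) ≥ α * U := by
      have : M ^ (-α) * U ≥ 1 * U := by
        apply mul_le_mul_of_nonpos_right hMa hU.le
      nlinarith
    have hMsq : M^2 * (ω^2 * I) ≥ 1 + α * (-U) := by
      have hs : Real.sqrt ((1 + α * (-U)) / (ω^2 * I)) ≤ M := le_max_right _ _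
      have := Real.sq_sqrt hM0
      have h3 : (1 + α * (-U)) / (ω^2 * I) ≤ M^2 := by
        rw [← this]
        apply pow_le_pow_left₀ (Real.sqrt_nonneg _) hs
      rw [div_le_iff₀ (by positivity)] at h3
      linarith
    have : 0 < M^2 * (ω^2 * I) + α * U := by nlinarith
    rw [hg]
    simp only
    nlinarith
  have hg1 : g 1 < 0 := by
    rw [hg]
    simp only [one_pow, Real.one_rpow, one_mul]
    calc ω^2 * I + α * U = Kfun α m ω q := by rw [Kfun]
    _ < 0 := hK
  have hcont : ContinuousOn g (Set.Icc 1 M) := by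
    apply ContinuousOn.add
    · exact (continuous_const.mul ((continuous_pow 2).mul continuous_const)).continuousOn
    · apply ContinuousOn.mul continuousOn_const
      apply ContinuousOn.mul _ continuousOn_const
      apply ContinuousOn.rpow_const continuousOn_id
      intro x hx
      exact Or.inl (by simp only [id]; intro h; rw [h] at hx; exact absurd hx.1 (by norm_num))
  have hIvt := intermediate_value_Icc h1M hcont
  have h0mem : (0:ℝ) ∈ Set.Icc (g 1) (g M) := ⟨hg1.le, hgM.le⟩
  obtain ⟨l, hlmem, hgl⟩ := hIvt h0mem
  have hl1 : 1 ≤ l := hlmem.1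
  have hl0 : 0 < l := lt_of_lt_of_le one_pos hl1
  set q' : Fin N → E3 := fun i => l • q i with hq'
  have hpot' : pot α m q' = l ^ (-α) * U := pot_smul α m q hl0
  have hin' : inertia m q' = l^2 * I := inertia_smul m q hl0
  have hK' : Kfun α m ω q' = 0 := by
    rw [Kfun, hpot', hin']
    exact hgl
  have hod' : OffDiag q' := by
    intro i j hij hq
    exact hod i j hij (smul_right_injective _ hl0.ne' hq)
  have hc' : comZero m q' := by
    rw [comZero]
    have : ∑ i, m i • q' i = l • ∑ i, m i • q i := by
      rw [Finset.smul_sum]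
      refine Finset.sum_congr rfl fun i _ => ?_
      rw [hq', smul_comm]
    rw [this, hc, smul_zero]
  have hmem : Eomega α m ω q' ∈ {e : ℝ | ∃ q : Fin N → E3, OffDiag q ∧ comZero m q ∧
      Kfun α m ω q = 0 ∧ e = Eomega α m ω q} := ⟨q', hod', hc', hK', rfl⟩
  have hle : Estar α m ω ≤ Eomega α m ω q' := by
    apply csInf_le ⟨0, Estar_lowerBound α ω hα m hm⟩ hmem
  refine le_trans hle ?_
  have hKeq : ω^2 * (l^2 * I) = -(α * (l ^ (-α) * U)) := by
    have := hgl
    rw [hg] at this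
    simp only at this
    linarith
  have hEom : Eomega α m ω q' = (α/2 - 1) * (l ^ (-α) * (-U)) := by
    rw [Eomega, hpot', hin']
    have : ω^2 / 2 * (l^2 * I) = -(α * (l ^ (-α) * U)) / 2 := by
      rw [← hKeq]; ring
    rw [this]
    ring
  rw [hEom]
  have hla : l ^ (-α) ≤ 1 := Real.rpow_le_one_of_one_le_of_nonpos hl1 (by linarith)
  have hla0 : 0 < l ^ (-α) := Real.rpow_pos_of_pos hl0 _
  have hmU : 0 < -U := by linarith
  apply mul_le_mul_of_nonneg_left _ (by linarith : (0:ℝ) ≤ α/2 - 1)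
  nlinarith

end Statics


section Dynamics

open RealInnerProductSpace

lemma mem_Dom_of_le {σ : EReal} {t s : ℝ} (ht : t ∈ Dom σ) (h0 : 0 ≤ s) (hst : s ≤ t) :
    s ∈ Dom σ :=
  ⟨h0, lt_of_le_of_lt (EReal.coe_le_coe_iff.2 hst) ht.2⟩

lemma zero_mem_Dom {σ : EReal} {t : ℝ} (ht : t ∈ Dom σ) : (0:ℝ) ∈ Dom σ :=
  mem_Dom_of_le ht (le_refl 0) ht.1

lemma antitoneOn_of_hasDerivAt_nonpos {f f' : ℝ → ℝ} {a b : ℝ}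
    (hd : ∀ s ∈ Set.Icc a b, HasDerivAt f (f' s) s)
    (h0 : ∀ s ∈ Set.Ioo a b, f' s ≤ 0) : AntitoneOn f (Set.Icc a b) := by
  refine antitoneOn_of_deriv_nonpos (convex_Icc a b)
    (fun s hs => (hd s hs).continuousAt.continuousWithinAt) ?_ ?_
  · intro s hs
    rw [interior_Icc] at hs
    exact ((hd s (Set.Ioo_subset_Icc_self hs)).differentiableAt).differentiableWithinAt
  · intro s hs
    rw [interior_Icc] at hs
    rw [(hd s (Set.Ioo_subset_Icc_self hs)).deriv]
    exact h0 s hs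

lemma solnData {α : ℝ} {m : Fin N → ℝ} {σ : EReal} {x v : ℝ → Fin N → E3}
    (hsol : IsSolnOn α m x v (Dom σ)) {t : ℝ} (ht : t ∈ Dom σ) :
    OffDiag (x t) ∧ (∀ i, HasDerivAt (fun τ => x τ i) (v t i) t)
      ∧ (∀ i, HasDerivAt (fun τ => v τ i) (accel α m (x t) i) t) := by
  obtain ⟨hod, hxv⟩ := hsol t ht
  exact ⟨hod, fun i => (hxv i).1, fun i => (hxv i).2⟩

lemma hasDerivAt_energy_zero {α : ℝ} {m : Fin N → ℝ} {σ : EReal} {x v : ℝ → Fin N → E3}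
    (hsol : IsSolnOn α m x v (Dom σ)) {t : ℝ} (ht : t ∈ Dom σ) :
    HasDerivAt (fun τ => energy α m (x τ) (v τ)) 0 t := by
  obtain ⟨hod, hx, hv⟩ := solnData hsol ht
  have h1 := hasDerivAt_kinetic (α := α) m hv
  have h2 := hasDerivAt_pot α m hod hx
  have h := h1.fun_add h2
  have he : (fun τ => kinetic m (v τ) + pot α m (x τ)) = fun τ => energy α m (x τ) (v τ) := by
    funext τ; rw [energy]
  rw [he] at h
  refine h.congr_deriv ?_
  rw [sum_inner_v_accel α m hod]
  ring

lemma energy_const {α : ℝ} {m : Fin N → ℝ} {σ : EReal} {x v : ℝ → Fin N → E3}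
    (hsol : IsSolnOn α m x v (Dom σ)) {t : ℝ} (ht : t ∈ Dom σ) :
    energy α m (x t) (v t) = energy α m (x 0) (v 0) := by
  have key := constant_of_has_deriv_right_zero (f := fun τ => energy α m (x τ) (v τ))
    (a := 0) (b := t)
    (fun s hs => (hasDerivAt_energy_zero hsol
      (mem_Dom_of_le ht hs.1 hs.2)).continuousAt.continuousWithinAt)
    (fun s hs => (hasDerivAt_energy_zero hsol
      (mem_Dom_of_le ht hs.1 hs.2.le)).hasDerivWithinAt)
  exact key t (Set.right_mem_Icc.2 ht.1)

lemma hasDerivAt_angMom_zero {α : ℝ} {m : Fin N → ℝ} {σ : EReal} {x v : ℝ → Fin N → E3}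
    (hsol : IsSolnOn α m x v (Dom σ)) {t : ℝ} (ht : t ∈ Dom σ) :
    HasDerivAt (fun τ => angMom m (x τ) (v τ)) 0 t := by
  obtain ⟨hod, hx, hv⟩ := solnData hsol ht
  have h : HasDerivAt (fun τ => ∑ i, m i • cross3 (x τ i) (v τ i))
      (∑ i, m i • (cross3 (v t i) (v t i) + cross3 (x t i) (accel α m (x t) i))) t :=
    HasDerivAt.fun_sum fun i _ => (hasDerivAt_cross3 (hx i) (hv i)).const_smul (m i)
  have he : (fun τ => ∑ i, m i • cross3 (x τ i) (v τ i))
      = fun τ => angMom m (x τ) (v τ) := by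
    funext τ; rw [angMom]
  rw [he] at h
  refine h.congr_deriv ?_
  have : ∀ i : Fin N, m i • (cross3 (v t i) (v t i) + cross3 (x t i) (accel α m (x t) i))
      = m i • cross3 (x t i) (accel α m (x t) i) := by
    intro i; rw [cross3_self, zero_add]
  rw [Finset.sum_congr rfl (fun i _ => this i), sum_smul_cross_accel α m (x t)]

lemma angMom_const {α : ℝ} {m : Fin N → ℝ} {σ : EReal} {x v : ℝ → Fin N → E3}
    (hsol : IsSolnOn α m x v (Dom σ)) {t : ℝ} (ht : t ∈ Dom σ) :
    angMom m (x t) (v t) = angMom m (x 0) (v 0) := by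
  have key := constant_of_has_deriv_right_zero (f := fun τ => angMom m (x τ) (v τ))
    (a := 0) (b := t)
    (fun s hs => (hasDerivAt_angMom_zero hsol
      (mem_Dom_of_le ht hs.1 hs.2)).continuousAt.continuousWithinAt)
    (fun s hs => (hasDerivAt_angMom_zero hsol
      (mem_Dom_of_le ht hs.1 hs.2.le)).hasDerivWithinAt)
  exact key t (Set.right_mem_Icc.2 ht.1)

/-- The second derivative of the inertia, with the Lagrange–Jacobi value. -/
lemma hasDerivAt_Idot_LJ {α : ℝ} {m : Fin N → ℝ} {σ : EReal} {x v : ℝ → Fin N → E3}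
    (hsol : IsSolnOn α m x v (Dom σ)) {t : ℝ} (ht : t ∈ Dom σ) :
    HasDerivAt (fun τ => Idot m (x τ) (v τ))
      (4 * kinetic m (v t) + 2 * α * pot α m (x t)) t := by
  obtain ⟨hod, hx, hv⟩ := solnData hsol ht
  have h := hasDerivAt_Idot (α := α) m hx hv
  refine h.congr_deriv ?_
  have e1 : ∑ i, m i * (⟪v t i, v t i⟫ + ⟪x t i, accel α m (x t) i⟫)
      = (∑ i, m i * ⟪v t i, v t i⟫) + ∑ i, m i * ⟪x t i, accel α m (x t) i⟫ := by
    rw [← Finset.sum_add_distrib]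
    exact Finset.sum_congr rfl fun i _ => by ring
  rw [e1, sum_inner_q_accel α m hod]
  have e2 : ∑ i, m i * ⟪v t i, v t i⟫ = 2 * kinetic m (v t) := by
    rw [kinetic]
    rw [show (2:ℝ) * ((1/2) * ∑ i, m i * ‖v t i‖ ^ 2) = ∑ i, m i * ‖v t i‖ ^ 2 by ring]
    exact Finset.sum_congr rfl fun i _ => by rw [real_inner_self_eq_norm_sq]
  rw [e2]
  ring

lemma hasDerivAt_inertia' {α : ℝ} {m : Fin N → ℝ} {σ : EReal} {x v : ℝ → Fin N → E3}
    (hsol : IsSolnOn α m x v (Dom σ)) {t : ℝ} (ht : t ∈ Dom σ) :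
    HasDerivAt (fun τ => inertia m (x τ)) (Idot m (x t) (v t)) t := by
  obtain ⟨hod, hx, hv⟩ := solnData hsol ht
  exact hasDerivAt_inertia m hx

lemma continuousAt_Kfun {α : ℝ} {m : Fin N → ℝ} {σ : EReal} {x v : ℝ → Fin N → E3} (ω : ℝ)
    (hsol : IsSolnOn α m x v (Dom σ)) {t : ℝ} (ht : t ∈ Dom σ) :
    ContinuousAt (fun τ => Kfun α m ω (x τ)) t := by
  obtain ⟨hod, hx, hv⟩ := solnData hsol ht
  have h1 := (hasDerivAt_inertia m hx).continuousAt
  have h2 := (hasDerivAt_pot α m hod hx).continuousAt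
  have : ContinuousAt (fun τ => ω^2 * inertia m (x τ) + α * pot α m (x τ)) t :=
    ((continuousAt_const.mul h1).add (continuousAt_const.mul h2))
  exact this

/-- Sundman's inequality. -/
lemma sundman {m : Fin N → ℝ} (hm : ∀ i, 0 < m i) (q w : Fin N → E3) :
    ‖angMom m q w‖ ^ 2 ≤ inertia m q * (2 * kinetic m w) := by
  have h1 : ‖angMom m q w‖ ≤ ∑ i, Real.sqrt (m i) * ‖q i‖ * (Real.sqrt (m i) * ‖w i‖) := by
    refine le_trans (norm_sum_le _ _) (Finset.sum_le_sum fun i _ => ?_)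
    rw [norm_smul, Real.norm_eq_abs, abs_of_pos (hm i)]
    calc m i * ‖cross3 (q i) (w i)‖ ≤ m i * (‖q i‖ * ‖w i‖) :=
          mul_le_mul_of_nonneg_left (norm_cross3_le _ _) (hm i).le
      _ = Real.sqrt (m i) * ‖q i‖ * (Real.sqrt (m i) * ‖w i‖) := by
          rw [show Real.sqrt (m i) * ‖q i‖ * (Real.sqrt (m i) * ‖w i‖)
            = (Real.sqrt (m i) * Real.sqrt (m i)) * (‖q i‖ * ‖w i‖) by ring,
            Real.mul_self_sqrt (hm i).le]
  have h2 : (∑ i, Real.sqrt (m i) * ‖q i‖ * (Real.sqrt (m i) * ‖w i‖)) ^ 2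
      ≤ (∑ i, (Real.sqrt (m i) * ‖q i‖) ^ 2) * ∑ i, (Real.sqrt (m i) * ‖w i‖) ^ 2 :=
    Finset.sum_mul_sq_le_sq_mul_sq _ _ _
  have hqe : ∑ i, (Real.sqrt (m i) * ‖q i‖) ^ 2 = inertia m q := by
    rw [inertia]
    refine Finset.sum_congr rfl fun i _ => ?_
    rw [mul_pow, Real.sq_sqrt (hm i).le]
  have hwe : ∑ i, (Real.sqrt (m i) * ‖w i‖) ^ 2 = 2 * kinetic m w := by
    rw [kinetic]
    rw [show (2:ℝ) * ((1/2) * ∑ i, m i * ‖w i‖ ^ 2) = ∑ i, m i * ‖w i‖ ^ 2 by ring]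
    refine Finset.sum_congr rfl fun i _ => ?_
    rw [mul_pow, Real.sq_sqrt (hm i).le]
  rw [hqe, hwe] at h2
  have h3 : (0:ℝ) ≤ ∑ i, Real.sqrt (m i) * ‖q i‖ * (Real.sqrt (m i) * ‖w i‖) :=
    Finset.sum_nonneg fun i _ => by positivity
  calc ‖angMom m q w‖ ^ 2 ≤ (∑ i, Real.sqrt (m i) * ‖q i‖ * (Real.sqrt (m i) * ‖w i‖)) ^ 2 :=
        pow_le_pow_left₀ (norm_nonneg _) h1 2
    _ ≤ _ := h2

end Dynamics


/-- **Trapping in `K₁⁻`** (`α > 2`, `ω > 0`): a solution with center of mass zero, energy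
below `E*(ω)`, nonzero angular momentum, starting with `|A| ≥ ω I(x(0))`, `K_ω(x(0)) < 0`
and `İ(0) ≤ 0`, stays in `K₁⁻` for all positive times of its maximal interval and has a
singularity in finite time. -/
theorem trapping_in_K1minus {N : ℕ} (α ω : ℝ) (hα : 2 < α) (hω : 0 < ω)
    (m : Fin N → ℝ) (hm : ∀ i, 0 < m i)
    (σ : EReal) (x v : ℝ → Fin N → E3) (hx : IsMaxSoln α m σ x v)
    (hcom : ∀ t ∈ Dom σ, comZero m (x t))
    (hE : energy α m (x 0) (v 0) < Estar α m ω)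
    (hA0 : angMom m (x 0) (v 0) ≠ 0)
    (hAge : ω * inertia m (x 0) ≤ ‖angMom m (x 0) (v 0)‖)
    (hK0 : Kfun α m ω (x 0) < 0)
    (hIdot : Idot m (x 0) (v 0) ≤ 0) :
    (∀ t ∈ Dom σ,
      ω * inertia m (x t) ≤ ‖angMom m (x t) (v t)‖ ∧ Kfun α m ω (x t) < 0) ∧
    σ < ⊤ := by
  classical
  obtain ⟨hσ0, hsol, -⟩ := hx
  have h0Dom : (0:ℝ) ∈ Dom σ := ⟨le_refl 0, by exact_mod_cast hσ0⟩
  set E0 := energy α m (x 0) (v 0) with hE0def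
  set A0 := angMom m (x 0) (v 0) with hA0def
  have hδ : 0 < Estar α m ω - E0 := by linarith
  set δ := Estar α m ω - E0 with hδdef
  have hU0 : pot α m (x 0) < 0 := pot_neg_of_K_neg hα m hm hK0
  obtain ⟨i0, j0, hij0⟩ := exists_pair_of_pot_neg hU0
  -- Lagrange–Jacobi bound wherever `K < 0`
  have hLJ : ∀ t ∈ Dom σ, Kfun α m ω (x t) < 0 →
      4 * kinetic m (v t) + 2 * α * pot α m (x t) ≤ -(4 * δ) := by
    intro t ht hKt
    have hod := (solnData hsol ht).1
    have hEs := Estar_le_bound hα hω hm hod (hcom t ht) hKt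
    have hEc := energy_const hsol ht
    rw [energy, ← hE0def] at hEc
    rw [hδdef]
    linarith
  -- monotonicity engine
  have engine : ∀ b ∈ Dom σ, (∀ s, 0 ≤ s → s < b → Kfun α m ω (x s) < 0) →
      (∀ s ∈ Set.Icc (0:ℝ) b, Idot m (x s) (v s) ≤ Idot m (x 0) (v 0) - 4 * δ * s) ∧
      (∀ s ∈ Set.Icc (0:ℝ) b, inertia m (x s) ≤ inertia m (x 0) - 2 * δ * s ^ 2) := by
    intro b hb hKb
    have hg : AntitoneOn (fun s => Idot m (x s) (v s) + 4 * δ * s) (Set.Icc 0 b) := by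
      apply antitoneOn_of_hasDerivAt_nonpos
        (f' := fun s => (4 * kinetic m (v s) + 2 * α * pot α m (x s)) + 4 * δ * 1)
      · intro s hs
        exact (hasDerivAt_Idot_LJ hsol (mem_Dom_of_le hb hs.1 hs.2)).add
          ((hasDerivAt_id s).const_mul (4 * δ))
      · intro s hs
        have := hLJ s (mem_Dom_of_le hb hs.1.le hs.2.le) (hKb s hs.1.le hs.2)
        linarith
    have claimA : ∀ s ∈ Set.Icc (0:ℝ) b, Idot m (x s) (v s) ≤ Idot m (x 0) (v 0) - 4 * δ * s := by
      intro s hs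
      have h0m : (0:ℝ) ∈ Set.Icc (0:ℝ) b := ⟨le_refl 0, hs.1.trans hs.2⟩
      have := hg h0m hs hs.1
      simp only at this
      linarith
    refine ⟨claimA, ?_⟩
    have hh : AntitoneOn (fun s => inertia m (x s) + 2 * δ * s ^ 2) (Set.Icc 0 b) := by
      apply antitoneOn_of_hasDerivAt_nonpos
        (f' := fun s => Idot m (x s) (v s) + 2 * δ * (↑(2:ℕ) * s ^ 1))
      · intro s hs
        exact (hasDerivAt_inertia' hsol (mem_Dom_of_le hb hs.1 hs.2)).add
          ((hasDerivAt_pow 2 s).const_mul (2 * δ))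
      · intro s hs
        have h1 := claimA s (Set.Ioo_subset_Icc_self hs)
        have h2 : (0:ℝ) ≤ s := hs.1.le
        have hpow : (↑(2:ℕ) : ℝ) * s ^ 1 = 2 * s := by norm_num
        rw [hpow]
        nlinarith
    intro s hs
    have h0m : (0:ℝ) ∈ Set.Icc (0:ℝ) b := ⟨le_refl 0, hs.1.trans hs.2⟩
    have := hh h0m hs hs.1
    simp only at this
    nlinarith
  -- trapping: K stays negative on the whole domain
  have claim_K : ∀ t ∈ Dom σ, Kfun α m ω (x t) < 0 := by
    by_contra hcon
    push_neg at hcon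
    obtain ⟨t1, ht1, hKt1⟩ := hcon
    set B := {t : ℝ | t ∈ Dom σ ∧ 0 ≤ Kfun α m ω (x t)} with hBdef
    have hBne : B.Nonempty := ⟨t1, ht1, hKt1⟩
    have hBlb : ∀ t ∈ B, (0:ℝ) ≤ t := fun t ht => ht.1.1
    set c := sInf B with hcdef
    have hc0 : 0 ≤ c := le_csInf hBne hBlb
    have hct1 : c ≤ t1 := csInf_le ⟨0, hBlb⟩ ⟨ht1, hKt1⟩
    have hcDom : c ∈ Dom σ := mem_Dom_of_le ht1 hc0 hct1
    have hKlt : ∀ s, 0 ≤ s → s < c → Kfun α m ω (x s) < 0 := by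
      intro s h0 hsc
      by_contra h
      push_neg at h
      have hsB : s ∈ B := ⟨mem_Dom_of_le hcDom h0 hsc.le, h⟩
      have h2 := csInf_le ⟨0, hBlb⟩ hsB
      rw [← hcdef] at h2
      linarith
    have hKc_ge : 0 ≤ Kfun α m ω (x c) := by
      by_contra h
      push_neg at h
      have hcont := continuousAt_Kfun ω hsol hcDom
      have hnhds : {τ : ℝ | Kfun α m ω (x τ) < 0} ∈ nhds c :=
        hcont.preimage_mem_nhds (Iio_mem_nhds h)
      obtain ⟨ε, hε, hball⟩ := Metric.mem_nhds_iff.1 hnhds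
      have hlb : ∀ t ∈ B, c + ε / 2 ≤ t := by
        intro t ht
        by_contra hlt
        push_neg at hlt
        have htc : c ≤ t := by
          have := csInf_le ⟨0, hBlb⟩ ht
          rw [← hcdef] at this
          exact this
        have htball : t ∈ Metric.ball c ε := by
          rw [Metric.mem_ball, Real.dist_eq, abs_lt]
          constructor <;> [linarith; linarith]
        have := hball htball
        simp only [Set.mem_setOf_eq] at this
        linarith [ht.2]
      have h2 := le_csInf hBne hlb
      rw [← hcdef] at h2
      linarith
    have hc_pos : 0 < c := by
      rcases hc0.lt_or_eq with h | h
      · exact h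
      · exfalso
        rw [← h] at hKc_ge
        linarith
    have hKc_le : Kfun α m ω (x c) ≤ 0 := by
      by_contra h
      push_neg at h
      have hcont := continuousAt_Kfun ω hsol hcDom
      have hnhds : {τ : ℝ | 0 < Kfun α m ω (x τ)} ∈ nhds c :=
        hcont.preimage_mem_nhds (Ioi_mem_nhds h)
      obtain ⟨ε, hε, hball⟩ := Metric.mem_nhds_iff.1 hnhds
      set s := max 0 (c - ε / 2) with hsdef
      have h0s : 0 ≤ s := le_max_left _ _
      have hsc : s < c := max_lt hc_pos (by linarith)
      have hsball : s ∈ Metric.ball c ε := by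
        rw [Metric.mem_ball, Real.dist_eq, abs_lt]
        have : c - ε / 2 ≤ s := le_max_right _ _
        constructor <;> linarith
      have h1 := hball hsball
      simp only [Set.mem_setOf_eq] at h1
      have h2 := hKlt s h0s hsc
      linarith
    have hKc : Kfun α m ω (x c) = 0 := le_antisymm hKc_le hKc_ge
    obtain ⟨hDf, hIf⟩ := engine c hcDom hKlt
    have hIc : inertia m (x c) ≤ inertia m (x 0) := by
      have := hIf c ⟨hc0, le_refl c⟩
      nlinarith [sq_nonneg c]
    have hAc : angMom m (x c) (v c) = A0 := angMom_const hsol hcDom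
    have hodc := (solnData hsol hcDom).1
    have hIcpos : 0 < inertia m (x c) := inertia_pos_of_offDiag hm hodc hij0
    have hsund := sundman hm (x c) (v c)
    rw [hAc] at hsund
    have hA_ge : ω * inertia m (x c) ≤ ‖A0‖ :=
      le_trans (mul_le_mul_of_nonneg_left hIc hω.le) hAge
    have hT : ω ^ 2 * inertia m (x c) ≤ 2 * kinetic m (v c) := by
      have h1 : (ω * inertia m (x c)) ^ 2 ≤ ‖A0‖ ^ 2 :=
        pow_le_pow_left₀ (by positivity) hA_ge 2
      have h2 := le_trans h1 hsund
      nlinarith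
    have hmem : Eomega α m ω (x c) ∈ {e : ℝ | ∃ q : Fin N → E3, OffDiag q ∧ comZero m q ∧
        Kfun α m ω q = 0 ∧ e = Eomega α m ω q} := ⟨x c, hodc, hcom c hcDom, hKc, rfl⟩
    have hEs_le : Estar α m ω ≤ Eomega α m ω (x c) := by
      rw [Estar]
      exact csInf_le ⟨0, Estar_lowerBound α ω hα m hm⟩ hmem
    rw [Eomega] at hEs_le
    have hEeq : kinetic m (v c) + pot α m (x c) = E0 := by
      have := energy_const hsol hcDom
      rw [energy, ← hE0def] at this
      exact this
    linarith
  -- conclusions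
  refine ⟨fun t ht => ?_, ?_⟩
  · have hKall : ∀ s, 0 ≤ s → s < t → Kfun α m ω (x s) < 0 :=
      fun s h0 hst => claim_K s (mem_Dom_of_le ht h0 hst.le)
    obtain ⟨-, hIf⟩ := engine t ht hKall
    have hIt : inertia m (x t) ≤ inertia m (x 0) := by
      have := hIf t ⟨ht.1, le_refl t⟩
      nlinarith [sq_nonneg t]
    have hAt : angMom m (x t) (v t) = A0 := angMom_const hsol ht
    refine ⟨?_, claim_K t ht⟩
    rw [hAt]
    exact le_trans (mul_le_mul_of_nonneg_left hIt hω.le) hAge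
  · by_contra htop
    push_neg at htop
    have hσtop : σ = ⊤ := top_le_iff.1 htop
    have hDomAll : ∀ s : ℝ, 0 ≤ s → s ∈ Dom σ := by
      intro s hs
      exact ⟨hs, by rw [hσtop]; exact EReal.coe_lt_top s⟩
    set T := Real.sqrt ((inertia m (x 0) + 1) / (2 * δ)) with hTdef
    have hT0 : 0 ≤ T := Real.sqrt_nonneg _
    have hTDom : T ∈ Dom σ := hDomAll T hT0
    have hKall : ∀ s, 0 ≤ s → s < T → Kfun α m ω (x s) < 0 :=
      fun s h0 _ => claim_K s (hDomAll s h0)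
    obtain ⟨-, hIf⟩ := engine T hTDom hKall
    have hI0 : 0 ≤ inertia m (x 0) := inertia_nonneg m hm (x 0)
    have hTsq : T ^ 2 = (inertia m (x 0) + 1) / (2 * δ) := by
      rw [hTdef]
      exact Real.sq_sqrt (by positivity)
    have hIT := hIf T ⟨hT0, le_refl T⟩
    rw [hTsq] at hIT
    have h2δ : (2 * δ) ≠ 0 := by positivity
    have hIT' : inertia m (x T) ≤ -1 := by
      have : 2 * δ * ((inertia m (x 0) + 1) / (2 * δ)) = inertia m (x 0) + 1 := by
        field_simp
      linarith [hIT, this.symm ▸ hIT]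
    linarith [inertia_nonneg m hm (x T)]


end
end NBodyPaper
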